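/- arXiv:2010.12137 — 3 statements merged into one kernel-verified Lean document; each statement's English description precedes it below -/
import Mathlib

section
/- Fix δ ∈ (0,1), n ∈ ℕ⁺, C > 0. Suppose that for every ψ ∈ Y the detectability inequality ‖φ_n(0;ψ)‖ ≤ δ‖ψ‖ + C‖B(·)*φ_n(·;ψ)‖_{L²(0,nT;U)} holds. Then for every z ∈ Y there exists a control u_z ∈ L²(0,nT;U) with ‖y(nT;0,z,u_z)‖ ≤ δ‖z‖ and ‖u_z‖_{L²(0,nT;U)} ≤ C‖z‖. -/
/-!
The functional `ψ ↦ ⟪z, φ0 ψ⟫` is bounded, by Cauchy–Schwarz and the detectability inequality, by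
the seminorm `(ψ, w) ↦ δ‖z‖‖ψ‖ + C‖z‖‖w‖` on the graph of `W`. Hahn–Banach extends it to `Y × 𝒰`
under the same bound, and Riesz representation of the two components splits it as
`⟪z, φ0 ψ⟫ = ⟪v, ψ⟫ + ⟪u, W ψ⟫` with `‖v‖ ≤ δ‖z‖`, `‖u‖ ≤ C‖z‖`. By the duality identity the
control `-u` then steers `z` to `yEnd z (-u) = v`.
-/

open scoped NNReal RealInnerProductSpace

section WeightedProduct

variable {E F : Type*} [SeminormedAddCommGroup E] [NormedSpace ℝ E]
  [SeminormedAddCommGroup F] [NormedSpace ℝ F]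

noncomputable def weightedProdSeminorm (a b : ℝ≥0) : Seminorm ℝ (E × F) :=
  a • (normSeminorm ℝ E).comp (LinearMap.fst ℝ E F) +
    b • (normSeminorm ℝ F).comp (LinearMap.snd ℝ E F)

@[simp]
theorem weightedProdSeminorm_apply (a b : ℝ≥0) (p : E × F) :
    weightedProdSeminorm a b p = a * ‖p.1‖ + b * ‖p.2‖ := by
  simp [weightedProdSeminorm, NNReal.smul_def]

theorem exists_dual_extension_of_le_weighted_norm (f : E →ₗ[ℝ] ℝ) (W : E →ₗ[ℝ] F) {a b : ℝ≥0}
    (hf : ∀ x, f x ≤ a * ‖x‖ + b * ‖W x‖) :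
    ∃ g : Module.Dual ℝ (E × F), (∀ x, g (x, W x) = f x) ∧
      ∀ p, |g p| ≤ weightedProdSeminorm a b p := by
  let fGraph : Module.Dual ℝ W.graph := f ∘ₗ LinearMap.fst ℝ E F ∘ₗ W.graph.subtype
  have hfGraph : ∀ p : W.graph, fGraph p ≤ weightedProdSeminorm a b (p : E × F) := by
    rintro ⟨⟨x, y⟩, hp⟩
    obtain rfl : y = W x := (W.mem_graph_iff _).1 hp
    simpa [fGraph] using hf x
  obtain ⟨g, hg, hgp⟩ := fGraph.exists_extension_of_le_seminorm_real W.graph hfGraph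
  exact ⟨g, fun x ↦ hg ⟨(x, W x), (W.mem_graph_iff _).2 rfl⟩, hgp⟩

theorem exists_strongDual_split_of_le_weighted_norm (f : E →ₗ[ℝ] ℝ) (W : E →ₗ[ℝ] F)
    {a b : ℝ≥0} (hf : ∀ x, f x ≤ a * ‖x‖ + b * ‖W x‖) :
    ∃ (g₁ : StrongDual ℝ E) (g₂ : StrongDual ℝ F),
      ‖g₁‖ ≤ a ∧ ‖g₂‖ ≤ b ∧ ∀ x, f x = g₁ x + g₂ (W x) := by
  obtain ⟨g, hgW, hg⟩ := exists_dual_extension_of_le_weighted_norm f W hf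
  have hg₁ : ∀ x, ‖(g ∘ₗ LinearMap.inl ℝ E F) x‖ ≤ a * ‖x‖ := fun x ↦ by
    simpa using hg (x, 0)
  have hg₂ : ∀ y, ‖(g ∘ₗ LinearMap.inr ℝ E F) y‖ ≤ b * ‖y‖ := fun y ↦ by
    simpa using hg (0, y)
  refine ⟨_, _, LinearMap.mkContinuous_norm_le _ a.2 hg₁,
    LinearMap.mkContinuous_norm_le _ b.2 hg₂, fun x ↦ ?_⟩
  rw [← hgW, ← Prod.fst_add_snd (x, W x), map_add]
  rfl

end WeightedProduct

theorem exists_inner_split_of_le_weighted_norm {E F : Type*}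
    [NormedAddCommGroup E] [InnerProductSpace ℝ E] [CompleteSpace E]
    [NormedAddCommGroup F] [InnerProductSpace ℝ F] [CompleteSpace F]
    (f : E →ₗ[ℝ] ℝ) (W : E →ₗ[ℝ] F) {a b : ℝ≥0} (hf : ∀ x, f x ≤ a * ‖x‖ + b * ‖W x‖) :
    ∃ (v : E) (u : F), ‖v‖ ≤ a ∧ ‖u‖ ≤ b ∧ ∀ x, f x = ⟪v, x⟫ + ⟪u, W x⟫ := by
  obtain ⟨g₁, g₂, hg₁, hg₂, hf_eq⟩ := exists_strongDual_split_of_le_weighted_norm f W hf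
  refine ⟨(InnerProductSpace.toDual ℝ E).symm g₁, (InnerProductSpace.toDual ℝ F).symm g₂,
    by simpa using hg₁, by simpa using hg₂, fun x ↦ ?_⟩
  simp only [InnerProductSpace.toDual_symm_apply, hf_eq]

/-- conversely, if the detectability inequality
`‖φ_n(0;ψ)‖ ≤ δ‖ψ‖ + C‖B(·)*φ_n(·;ψ)‖` holds for all `ψ`, then every `z` can
be steered with `‖y(nT;0,z,u_z)‖ ≤ δ‖z‖` and `‖u_z‖ ≤ C‖z‖`.  Here `𝒰` plays
the role of `L²(0,nT;U)`, `yEnd z u = y(nT;0,z,u)`, `φ0 ψ = φ_n(0;ψ)` and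
`W ψ = B(·)*φ_n(·;ψ)` (both linear in the terminal datum `ψ`), and the
duality identity is the standard one. -/
theorem steering_of_detectability
    {Y 𝒰 : Type*} [NormedAddCommGroup Y] [InnerProductSpace ℝ Y] [CompleteSpace Y]
    [NormedAddCommGroup 𝒰] [InnerProductSpace ℝ 𝒰] [CompleteSpace 𝒰]
    (δ C : ℝ) (hδ : δ ∈ Set.Ioo (0:ℝ) 1) (hC : 0 < C)
    (yEnd : Y → 𝒰 → Y) (φ0 : Y →ₗ[ℝ] Y) (W : Y →ₗ[ℝ] 𝒰)
    (hdual : ∀ (z : Y) (u : 𝒰) (ψ : Y),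
      ⟪yEnd z u, ψ⟫ - ⟪z, φ0 ψ⟫ = ⟪u, W ψ⟫)
    (hdet : ∀ ψ : Y, ‖φ0 ψ‖ ≤ δ * ‖ψ‖ + C * ‖W ψ‖) :
    ∀ z : Y, ∃ u : 𝒰, ‖yEnd z u‖ ≤ δ * ‖z‖ ∧ ‖u‖ ≤ C * ‖z‖ := by
  intro z
  have hbound : ∀ ψ, (innerₛₗ ℝ z ∘ₗ φ0) ψ ≤ δ * ‖z‖ * ‖ψ‖ + C * ‖z‖ * ‖W ψ‖ := fun ψ ↦
    calc ⟪z, φ0 ψ⟫ ≤ ‖z‖ * ‖φ0 ψ‖ := real_inner_le_norm _ _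
      _ ≤ ‖z‖ * (δ * ‖ψ‖ + C * ‖W ψ‖) := by gcongr; exact hdet ψ
      _ = δ * ‖z‖ * ‖ψ‖ + C * ‖z‖ * ‖W ψ‖ := by ring
  obtain ⟨v, u, hv, hu, hsplit⟩ := exists_inner_split_of_le_weighted_norm (innerₛₗ ℝ z ∘ₗ φ0) W
    (a := ⟨δ * ‖z‖, mul_nonneg hδ.1.le (norm_nonneg z)⟩)
    (b := ⟨C * ‖z‖, mul_nonneg hC.le (norm_nonneg z)⟩) hbound
  have hsteer : yEnd z (-u) = v := ext_inner_right ℝ fun ψ ↦ by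
    have hsplitψ : ⟪z, φ0 ψ⟫ = ⟪v, ψ⟫ + ⟪u, W ψ⟫ := hsplit ψ
    linarith [hdual z (-u) ψ, inner_neg_left (𝕜 := ℝ) u (W ψ)]
  exact ⟨-u, hsteer ▸ hv, (norm_neg u).trans_le hu⟩
end

section
/- Suppose for some δ ∈ (0,1), n ∈ ℕ⁺, C > 0 the detectability inequality ‖φ_n(0;ψ)‖² ≤ 2δ²‖ψ‖² + 2C²‖B(·)*φ_n(·;ψ)‖²_{L²(0,nT;U)} holds for all ψ ∈ Y, with 2δ² < 1. Then for every k ∈ ℕ⁺ and z ∈ Y, ‖φ_{kn}(0;z)‖² ≤ (2δ²)^k‖z‖² + 2C²‖B(·)*φ_{kn}(·;z)‖²_{L²(0,knT;U)}, where φ_{kn}(·;z) solves the adjoint equation on [0,knT] with terminal condition z at time knT. -/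
/-!
Over `k + 1` blocks of length `L = nT`, the cocycle and periodicity identities give
`Φ((k+1)L, 0)* z = Φ(L, 0)* ψ` with `ψ = Φ(kL, 0)* z`, and they split the observation of `z` on
`(0, (k+1)L]` into the observation of `ψ` on `(0, L]` and a translate of the observation of `z`
on `(0, kL]`. The one-block inequality for `ψ`, the induction hypothesis and `2δ² ≤ 1` then give
the bound for `k + 1`.

The splitting needs integrability, because a non-integrable observation has Bochner integral `0`.
If the observation of some `ψ₀` is not integrable, the parallelogram law shows that for every `ψ`
one of `ψ ± c ψ₀` has a non-integrable observation, for each `c ≠ 0`. On that dense set the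
one-block inequality reads `‖Φ(L, 0)* ψ‖² ≤ 2δ² ‖ψ‖²`; by continuity this contraction holds
everywhere, and iterating it gives the bound with the observation term dropped.
-/

open MeasureTheory Set ContinuousLinearMap

theorem nsmul_periodicOn {M X : Type*} [AddMonoid M] {f : M → X} {S : Set M} {p : M}
    (hS : ∀ x ∈ S, x + p ∈ S) (hf : ∀ x ∈ S, f (x + p) = f x) (m : ℕ) :
    ∀ x ∈ S, f (x + m • p) = f x := by
  induction m with
  | zero => simp
  | succ m ih =>
    intro x hx
    rw [succ_nsmul', ← add_assoc, ih _ (hS x hx), hf x hx]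

theorem integrableOn_Ioc_add_of_shift {E : Type*} [NormedAddCommGroup E] {f : ℝ → E} {a L : ℝ}
    (hL : 0 ≤ L) (ha : 0 ≤ a) (h₁ : IntegrableOn f (Ioc 0 L))
    (h₂ : IntegrableOn (fun t ↦ f (t + L)) (Ioc 0 a)) : IntegrableOn f (Ioc 0 (a + L)) := by
  rw [← intervalIntegrable_iff_integrableOn_Ioc_of_le (by linarith)] at *
  rw [IntervalIntegrable.comp_add_right_iff, zero_add] at h₂
  exact h₁.trans h₂

theorem setIntegral_Ioc_add_of_shift {E : Type*} [NormedAddCommGroup E] [NormedSpace ℝ E]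
    {f : ℝ → E} {a L : ℝ}
    (hL : 0 ≤ L) (ha : 0 ≤ a) (h₁ : IntegrableOn f (Ioc 0 L))
    (h₂ : IntegrableOn (fun t ↦ f (t + L)) (Ioc 0 a)) :
    ∫ t in Ioc 0 (a + L), f t = (∫ t in Ioc 0 L, f t) + ∫ t in Ioc 0 a, f (t + L) := by
  rw [← intervalIntegrable_iff_integrableOn_Ioc_of_le (by linarith)] at h₁ h₂
  rw [IntervalIntegrable.comp_add_right_iff, zero_add] at h₂
  rw [← intervalIntegral.integral_of_le (by linarith), ← intervalIntegral.integral_of_le hL,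
    ← intervalIntegral.integral_of_le ha, intervalIntegral.integral_comp_add_right, zero_add,
    intervalIntegral.integral_add_adjacent_intervals h₁ h₂]

theorem norm_sq_eq_of_parallelogram {F : Type*} [NormedAddCommGroup F] [InnerProductSpace ℝ F]
    (x y : F) {c : ℝ} (hc : c ≠ 0) :
    ‖y‖ ^ 2 = (2 * c ^ 2)⁻¹ * (‖x + c • y‖ ^ 2 + ‖x - c • y‖ ^ 2 - 2 * ‖x‖ ^ 2) := by
  have h := parallelogram_law_with_norm ℝ x (c • y)
  rw [norm_smul, Real.norm_eq_abs] at h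
  field_simp
  nlinarith [sq_abs c]

theorem integrableOn_norm_sq_apply_of_add_sub {α E F : Type*} [MeasurableSpace α] {μ : Measure α}
    {s : Set α} [NormedAddCommGroup E] [NormedSpace ℝ E]
    [NormedAddCommGroup F] [InnerProductSpace ℝ F] {G : α → E →L[ℝ] F} {x y : E} {c : ℝ}
    (hc : c ≠ 0) (hx : IntegrableOn (fun t ↦ ‖G t x‖ ^ 2) s μ)
    (hadd : IntegrableOn (fun t ↦ ‖G t (x + c • y)‖ ^ 2) s μ)
    (hsub : IntegrableOn (fun t ↦ ‖G t (x - c • y)‖ ^ 2) s μ) :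
    IntegrableOn (fun t ↦ ‖G t y‖ ^ 2) s μ := by
  have h : IntegrableOn (fun t ↦ (2 * c ^ 2)⁻¹ *
      (‖G t (x + c • y)‖ ^ 2 + ‖G t (x - c • y)‖ ^ 2 - 2 * ‖G t x‖ ^ 2)) s μ :=
    ((hadd.add hsub).sub (hx.const_mul 2)).const_mul _
  refine h.congr (ae_of_all _ fun t ↦ ?_)
  simp only [map_add, map_sub, map_smul]
  exact (norm_sq_eq_of_parallelogram (G t x) (G t y) hc).symm

theorem dense_setOf_not_of_add_sub {E : Type*} [NormedAddCommGroup E] [NormedSpace ℝ E]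
    {P : E → Prop} (hP : ∀ x y (c : ℝ), c ≠ 0 → P x → P (x + c • y) → P (x - c • y) → P y)
    {y : E} (hy : ¬ P y) : Dense {x | ¬ P x} := by
  refine Metric.dense_iff.2 fun x ε hε ↦
    (em (P x)).elim (fun hx ↦ ?_) fun hx ↦ ⟨x, Metric.mem_ball_self hε, hx⟩
  set c := ε / (‖y‖ + 1)
  have hc : 0 < c := by positivity
  have hcy : ‖c • y‖ < ε := by
    rw [norm_smul, Real.norm_of_nonneg hc.le, div_mul_eq_mul_div, div_lt_iff₀ (by positivity)]
    nlinarith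
  by_cases hadd : P (x + c • y)
  · refine ⟨x - c • y, by simpa [dist_eq_norm] using hcy, fun hsub ↦ hy ?_⟩
    exact hP x y c hc.ne' hx hadd hsub
  · exact ⟨x + c • y, by simpa [dist_eq_norm] using hcy, hadd⟩

theorem norm_sq_le_of_not_integrableOn {α E E' F : Type*} [MeasurableSpace α] {μ : Measure α}
    {s : Set α} [NormedAddCommGroup E] [NormedSpace ℝ E] [NormedAddCommGroup E']
    [NormedSpace ℝ E'] [NormedAddCommGroup F] [InnerProductSpace ℝ F]
    {A : E →L[ℝ] E'} {G : α → E →L[ℝ] F} {q D : ℝ}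
    (hbase : ∀ x, ‖A x‖ ^ 2 ≤ q * ‖x‖ ^ 2 + D * ∫ t in s, ‖G t x‖ ^ 2 ∂μ)
    {y : E} (hy : ¬ IntegrableOn (fun t ↦ ‖G t y‖ ^ 2) s μ) (x : E) :
    ‖A x‖ ^ 2 ≤ q * ‖x‖ ^ 2 := by
  have hdense : Dense {x | ¬ IntegrableOn (fun t ↦ ‖G t x‖ ^ 2) s μ} :=
    dense_setOf_not_of_add_sub (fun _ _ _ hc ↦ integrableOn_norm_sq_apply_of_add_sub hc) hy
  refine hdense.induction (fun x hx ↦ ?_) (isClosed_le (by fun_prop) (by fun_prop)) x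
  simpa [integral_undef hx] using hbase x

section Periodic

variable {Y U : Type*} [NormedAddCommGroup Y] [NormedSpace ℝ Y] [NormedAddCommGroup U]
  [NormedSpace ℝ U]

structure IsPeriodicEvolution (Φ : ℝ → ℝ → Y →L[ℝ] Y) (B : ℝ → U →L[ℝ] Y) (P : ℝ) : Prop where
  comp : ∀ s r t : ℝ, 0 ≤ s → s ≤ r → r ≤ t → Φ t s = (Φ t r).comp (Φ r s)
  evol_periodic : ∀ s t : ℝ, 0 ≤ s → s ≤ t → Φ (t + P) (s + P) = Φ t s
  control_periodic : ∀ t : ℝ, 0 ≤ t → B (t + P) = B t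

theorem IsPeriodicEvolution.nat_mul {Φ : ℝ → ℝ → Y →L[ℝ] Y} {B : ℝ → U →L[ℝ] Y} {T : ℝ}
    (h : IsPeriodicEvolution Φ B T) (hT : 0 ≤ T) (n : ℕ) : IsPeriodicEvolution Φ B (n * T) where
  comp := h.comp
  evol_periodic s t hs hst := by
    have := nsmul_periodicOn (f := fun x : ℝ × ℝ ↦ Φ x.2 x.1) (S := {x | 0 ≤ x.1 ∧ x.1 ≤ x.2})
      (p := (T, T)) (fun x hx ↦ ⟨by simp; linarith [hx.1], by simpa using hx.2⟩)
      (fun x hx ↦ h.evol_periodic x.1 x.2 hx.1 hx.2) n (s, t) ⟨hs, hst⟩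
    simpa [nsmul_eq_mul] using this
  control_periodic t ht := by
    have := nsmul_periodicOn (f := B) (S := Ici 0) (p := T) (fun x hx ↦ by simp at hx ⊢; linarith)
      h.control_periodic n t ht
    simpa [nsmul_eq_mul] using this

end Periodic

section Evolution

variable {Y U : Type*} [NormedAddCommGroup Y] [InnerProductSpace ℝ Y] [CompleteSpace Y]
  [NormedAddCommGroup U] [InnerProductSpace ℝ U]

/-- `observation Φ B τ t ψ = B(t)* φ(t)`, where `φ(t) = Φ(τ, t)* ψ` solves the adjoint equation
on `[0, τ]` with `φ(τ) = ψ`. -/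
noncomputable def observation [CompleteSpace U] (Φ : ℝ → ℝ → Y →L[ℝ] Y) (B : ℝ → U →L[ℝ] Y)
    (τ t : ℝ) : Y →L[ℝ] U :=
  adjoint (B t) ∘L adjoint (Φ τ t)

namespace IsPeriodicEvolution

variable {Φ : ℝ → ℝ → Y →L[ℝ] Y} {B : ℝ → U →L[ℝ] Y} {L : ℝ}

theorem adjoint_apply_add_period (h : IsPeriodicEvolution Φ B L) {a t : ℝ} (ha : 0 ≤ a)
    (ht₀ : 0 ≤ t) (htL : t ≤ L) (z : Y) :
    adjoint (Φ (a + L) t) z = adjoint (Φ L t) (adjoint (Φ a 0) z) := by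
  have hshift : Φ (a + L) L = Φ a 0 := by simpa using h.evol_periodic 0 a le_rfl ha
  rw [h.comp t L (a + L) ht₀ htL (by linarith), adjoint_comp, hshift]
  rfl

theorem norm_sq_adjoint_nat_mul_le (h : IsPeriodicEvolution Φ B L) (hL : 0 ≤ L) {q : ℝ}
    (hq : 0 ≤ q) (hcontr : ∀ ψ, ‖adjoint (Φ L 0) ψ‖ ^ 2 ≤ q * ‖ψ‖ ^ 2) {k : ℕ} (hk : 1 ≤ k)
    (z : Y) : ‖adjoint (Φ (k * L) 0) z‖ ^ 2 ≤ q ^ k * ‖z‖ ^ 2 := by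
  induction k, hk using Nat.le_induction with
  | base => simpa using hcontr z
  | succ k hk ih =>
    have ha : 0 ≤ (k : ℝ) * L := by positivity
    rw [Nat.cast_succ, add_one_mul, h.adjoint_apply_add_period ha le_rfl hL, pow_succ]
    calc _ ≤ q * ‖adjoint (Φ (k * L) 0) z‖ ^ 2 := hcontr _
      _ ≤ q * (q ^ k * ‖z‖ ^ 2) := by gcongr
      _ = _ := by ring

variable [CompleteSpace U]

theorem observation_add_period (h : IsPeriodicEvolution Φ B L) {a t : ℝ} (ha : 0 ≤ a)
    (ht₀ : 0 ≤ t) (htL : t ≤ L) (z : Y) :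
    observation Φ B (a + L) t z = observation Φ B L t (adjoint (Φ a 0) z) := by
  simp only [observation, comp_apply, h.adjoint_apply_add_period ha ht₀ htL]

theorem observation_add_period_add_period (h : IsPeriodicEvolution Φ B L) {a t : ℝ}
    (ht₀ : 0 ≤ t) (hta : t ≤ a) (z : Y) :
    observation Φ B (a + L) (t + L) z = observation Φ B a t z := by
  simp only [observation, h.control_periodic t ht₀, h.evol_periodic t a ht₀ hta]

theorem integrableOn_and_setIntegral_observation_add_period (h : IsPeriodicEvolution Φ B L)
    (hL : 0 ≤ L) {a : ℝ} (ha : 0 ≤ a) {z : Y}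
    (hψ : IntegrableOn (fun t ↦ ‖observation Φ B L t (adjoint (Φ a 0) z)‖ ^ 2) (Ioc 0 L))
    (hz : IntegrableOn (fun t ↦ ‖observation Φ B a t z‖ ^ 2) (Ioc 0 a)) :
    IntegrableOn (fun t ↦ ‖observation Φ B (a + L) t z‖ ^ 2) (Ioc 0 (a + L)) ∧
      ∫ t in Ioc 0 (a + L), ‖observation Φ B (a + L) t z‖ ^ 2 =
        (∫ t in Ioc 0 L, ‖observation Φ B L t (adjoint (Φ a 0) z)‖ ^ 2) +
          ∫ t in Ioc 0 a, ‖observation Φ B a t z‖ ^ 2 := by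
  have hfirst : EqOn (fun t ↦ ‖observation Φ B L t (adjoint (Φ a 0) z)‖ ^ 2)
      (fun t ↦ ‖observation Φ B (a + L) t z‖ ^ 2) (Ioc 0 L) := fun t ht ↦ by
    simp only [h.observation_add_period ha ht.1.le ht.2]
  have hsecond : EqOn (fun t ↦ ‖observation Φ B a t z‖ ^ 2)
      (fun t ↦ ‖observation Φ B (a + L) (t + L) z‖ ^ 2) (Ioc 0 a) := fun t ht ↦ by
    simp only [h.observation_add_period_add_period ht.1.le ht.2]
  have h₁ := hψ.congr_fun hfirst measurableSet_Ioc
  have h₂ := hz.congr_fun hsecond measurableSet_Ioc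
  refine ⟨integrableOn_Ioc_add_of_shift hL ha h₁ h₂, ?_⟩
  rw [setIntegral_Ioc_add_of_shift hL ha h₁ h₂, setIntegral_congr_fun measurableSet_Ioc hfirst,
    setIntegral_congr_fun measurableSet_Ioc hsecond]

theorem integrableOn_and_norm_sq_adjoint_nat_mul_le (h : IsPeriodicEvolution Φ B L)
    (hL : 0 ≤ L) {q D : ℝ} (hq₀ : 0 ≤ q) (hq₁ : q ≤ 1) (hD : 0 ≤ D)
    (hint : ∀ ψ, IntegrableOn (fun t ↦ ‖observation Φ B L t ψ‖ ^ 2) (Ioc 0 L))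
    (hbase : ∀ ψ, ‖adjoint (Φ L 0) ψ‖ ^ 2 ≤
      q * ‖ψ‖ ^ 2 + D * ∫ t in Ioc 0 L, ‖observation Φ B L t ψ‖ ^ 2)
    {k : ℕ} (hk : 1 ≤ k) (z : Y) :
    IntegrableOn (fun t ↦ ‖observation Φ B (k * L) t z‖ ^ 2) (Ioc 0 (k * L)) ∧
      ‖adjoint (Φ (k * L) 0) z‖ ^ 2 ≤
        q ^ k * ‖z‖ ^ 2 + D * ∫ t in Ioc 0 (k * L), ‖observation Φ B (k * L) t z‖ ^ 2 := by
  induction k, hk using Nat.le_induction with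
  | base => simpa using ⟨hint z, hbase z⟩
  | succ k hk ih =>
    obtain ⟨hz, hle⟩ := ih
    have ha : 0 ≤ (k : ℝ) * L := by positivity
    obtain ⟨hint', hsplit⟩ :=
      h.integrableOn_and_setIntegral_observation_add_period hL ha (hint _) hz
    rw [Nat.cast_succ, add_one_mul]
    refine ⟨hint', ?_⟩
    have hI : 0 ≤ ∫ t in Ioc 0 ((k : ℝ) * L), ‖observation Φ B (k * L) t z‖ ^ 2 := by
      positivity
    rw [h.adjoint_apply_add_period ha le_rfl hL, hsplit]
    calc ‖adjoint (Φ L 0) (adjoint (Φ (k * L) 0) z)‖ ^ 2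
        ≤ q * ‖adjoint (Φ (k * L) 0) z‖ ^ 2 +
            D * ∫ t in Ioc 0 L, ‖observation Φ B L t (adjoint (Φ (k * L) 0) z)‖ ^ 2 := hbase _
      _ ≤ q * (q ^ k * ‖z‖ ^ 2 + D * ∫ t in Ioc 0 ((k : ℝ) * L),
            ‖observation Φ B (k * L) t z‖ ^ 2) +
            D * ∫ t in Ioc 0 L, ‖observation Φ B L t (adjoint (Φ (k * L) 0) z)‖ ^ 2 := by
          gcongr
      _ ≤ _ := by
          rw [pow_succ q k]
          nlinarith [mul_nonneg (sub_nonneg.2 hq₁) (mul_nonneg hD hI)]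

end IsPeriodicEvolution

end Evolution

theorem iterated_detectability_general
    {Y U : Type*} [NormedAddCommGroup Y] [InnerProductSpace ℝ Y] [CompleteSpace Y]
    [NormedAddCommGroup U] [InnerProductSpace ℝ U] [CompleteSpace U]
    (T : ℝ) (hT : 0 < T) (n : ℕ)
    (δ C : ℝ) (h2δ : 2 * δ ^ 2 < 1)
    (Φ : ℝ → ℝ → Y →L[ℝ] Y) (B : ℝ → U →L[ℝ] Y)
    (hcomp : ∀ s r t : ℝ, 0 ≤ s → s ≤ r → r ≤ t → Φ t s = (Φ t r).comp (Φ r s))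
    (hΦper : ∀ s t : ℝ, 0 ≤ s → s ≤ t → Φ (t + T) (s + T) = Φ t s)
    (hBper : ∀ t : ℝ, 0 ≤ t → B (t + T) = B t)
    (hbase : ∀ ψ : Y,
      ‖ContinuousLinearMap.adjoint (Φ ((n : ℝ) * T) 0) ψ‖ ^ 2 ≤
        2 * δ ^ 2 * ‖ψ‖ ^ 2 + 2 * C ^ 2 *
          ∫ t in Set.Ioc (0:ℝ) ((n : ℝ) * T),
            ‖ContinuousLinearMap.adjoint (B t)
              (ContinuousLinearMap.adjoint (Φ ((n : ℝ) * T) t) ψ)‖ ^ 2) :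
    ∀ k : ℕ, 0 < k → ∀ z : Y,
      ‖ContinuousLinearMap.adjoint (Φ (((k * n : ℕ) : ℝ) * T) 0) z‖ ^ 2 ≤
        (2 * δ ^ 2) ^ k * ‖z‖ ^ 2 + 2 * C ^ 2 *
          ∫ t in Set.Ioc (0:ℝ) (((k * n : ℕ) : ℝ) * T),
            ‖ContinuousLinearMap.adjoint (B t)
              (ContinuousLinearMap.adjoint (Φ (((k * n : ℕ) : ℝ) * T) t) z)‖ ^ 2 := by
  intro k hk z
  have hsys : IsPeriodicEvolution Φ B (n * T) := .nat_mul ⟨hcomp, hΦper, hBper⟩ hT.le n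
  have hL : 0 ≤ (n : ℝ) * T := by positivity
  have hq : 0 ≤ 2 * δ ^ 2 := by positivity
  rw [Nat.cast_mul, mul_assoc]
  by_cases hint : ∀ ψ, IntegrableOn (fun t ↦ ‖observation Φ B (n * T) t ψ‖ ^ 2) (Ioc 0 (n * T))
  · exact (hsys.integrableOn_and_norm_sq_adjoint_nat_mul_le hL hq h2δ.le (by positivity) hint
      hbase hk z).2
  · obtain ⟨ψ₀, hψ₀⟩ := not_forall.1 hint
    have hcontr := norm_sq_le_of_not_integrableOn (G := observation Φ B (n * T)) hbase hψ₀
    have hI : 0 ≤ 2 * C ^ 2 * ∫ t in Ioc 0 (k * (n * T)),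
        ‖adjoint (B t) (adjoint (Φ (k * (n * T)) t) z)‖ ^ 2 := by positivity
    linarith [hsys.norm_sq_adjoint_nat_mul_le hL hq hcontr hk z]

/-- iterating the one-period (squared) detectability inequality.
Here `φ_m(t;ψ) = Φ(mT,t)*ψ` and `B(·)*φ_m(·;ψ)` is the observation. -/
theorem iterated_detectability
    {Y U : Type*} [NormedAddCommGroup Y] [InnerProductSpace ℝ Y] [CompleteSpace Y]
    [NormedAddCommGroup U] [InnerProductSpace ℝ U] [CompleteSpace U]
    (T : ℝ) (hT : 0 < T) (n : ℕ) (hn : 0 < n)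
    (δ C : ℝ) (hδ : δ ∈ Set.Ioo (0:ℝ) 1) (h2δ : 2 * δ ^ 2 < 1) (hC : 0 < C)
    (Φ : ℝ → ℝ → Y →L[ℝ] Y) (B : ℝ → U →L[ℝ] Y)
    (hcomp : ∀ s r t : ℝ, 0 ≤ s → s ≤ r → r ≤ t → Φ t s = (Φ t r).comp (Φ r s))
    (hΦper : ∀ s t : ℝ, 0 ≤ s → s ≤ t → Φ (t + T) (s + T) = Φ t s)
    (hBper : ∀ t : ℝ, 0 ≤ t → B (t + T) = B t)
    (hbase : ∀ ψ : Y,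
      ‖ContinuousLinearMap.adjoint (Φ ((n : ℝ) * T) 0) ψ‖ ^ 2 ≤
        2 * δ ^ 2 * ‖ψ‖ ^ 2 + 2 * C ^ 2 *
          ∫ t in Set.Ioc (0:ℝ) ((n : ℝ) * T),
            ‖ContinuousLinearMap.adjoint (B t)
              (ContinuousLinearMap.adjoint (Φ ((n : ℝ) * T) t) ψ)‖ ^ 2) :
    ∀ k : ℕ, 0 < k → ∀ z : Y,
      ‖ContinuousLinearMap.adjoint (Φ (((k * n : ℕ) : ℝ) * T) 0) z‖ ^ 2 ≤
        (2 * δ ^ 2) ^ k * ‖z‖ ^ 2 + 2 * C ^ 2 *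
          ∫ t in Set.Ioc (0:ℝ) (((k * n : ℕ) : ℝ) * T),
            ‖ContinuousLinearMap.adjoint (B t)
              (ContinuousLinearMap.adjoint (Φ (((k * n : ℕ) : ℝ) * T) t) z)‖ ^ 2 :=
  iterated_detectability_general T hT n δ C h2δ Φ B hcomp hΦper hBper hbase
end

section
/- Let ψ ∈ L²(0,π) with Fourier coefficients a_k(π) (k ≥ 1 against sin(kx)) and let φ solve the adjoint equation φ_t + (Δ + 3sin²t)φ = 0 on (0,π)×[0,π] with φ(·,π) = ψ. Then ‖φ(·,0)‖²_{L²(0,π)} ≤ (π/2)e^{4π}a_1(π)² + e^{−2π}‖ψ‖²_{L²(0,π)}, and ∫_0^π (∫_0^π φ(x,t) sin x dx)² dt ≥ (π/8)a_1(π)². Consequently ‖φ(·,0)‖ ≤ e^{−π}‖ψ‖ + 2e^{2π}‖B*φ‖_{L²(0,π)}, where B*φ(t) = ∫_0^π φ(x,t)sin x dx, i.e., the detectability inequality holds with δ = e^{−π}, n = 1, C = 2e^{2π}. -/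
open Real MeasureTheory

private lemma sqrt_add_le' {A B : ℝ} (hA : 0 ≤ A) (hB : 0 ≤ B) :
    Real.sqrt (A + B) ≤ Real.sqrt A + Real.sqrt B := by
  rw [show A + B = Real.sqrt A ^ 2 + Real.sqrt B ^ 2 by
    rw [Real.sq_sqrt hA, Real.sq_sqrt hB]]
  have h1 := Real.sqrt_nonneg A
  have h2 := Real.sqrt_nonneg B
  rw [show Real.sqrt A ^ 2 + Real.sqrt B ^ 2 =
    (Real.sqrt A + Real.sqrt B) ^ 2 - 2 * (Real.sqrt A * Real.sqrt B) by ring]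
  calc Real.sqrt ((Real.sqrt A + Real.sqrt B) ^ 2 - 2 * (Real.sqrt A * Real.sqrt B))
      ≤ Real.sqrt ((Real.sqrt A + Real.sqrt B) ^ 2) := by
        apply Real.sqrt_le_sqrt; nlinarith
    _ = Real.sqrt A + Real.sqrt B := by
        rw [Real.sqrt_sq (by positivity)]

/-- the detectability inequality for the adjoint heat equation,
with `δ = e^{−π}`, `n = 1`, `C = 2e^{2π}`.  Here `a (k+1)` (for `k : ℕ`) are
the Fourier coefficients against `sin((k+1)x)`; `Nφ0 = ‖φ(·,0)‖`,
`Nψ = ‖ψ‖`, and `B*φ(t) = ∫_0^π φ(x,t)sin x dx = (π/2)a_1(t)`. -/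
theorem heat_detectability_inequality
    (a : ℕ → ℝ → ℝ) (Nφ0 Nψ : ℝ)
    (hbd : ∀ k : ℕ, 1 ≤ k → |a k 0| ≤ Real.exp (-((k : ℝ) ^ 2 - 3) * π) * |a k π|)
    (h1 : ∀ t ∈ Set.Icc (0:ℝ) π, Real.exp (t - π) * |a 1 π| ≤ |a 1 t|)
    (hsum0 : Summable fun k : ℕ => a (k + 1) 0 ^ 2)
    (hsumπ : Summable fun k : ℕ => a (k + 1) π ^ 2)
    (hNφ0 : 0 ≤ Nφ0) (hNψ : 0 ≤ Nψ)
    (hφ0 : Nφ0 ^ 2 = (π / 2) * ∑' k : ℕ, a (k + 1) 0 ^ 2)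
    (hψ : Nψ ^ 2 = (π / 2) * ∑' k : ℕ, a (k + 1) π ^ 2)
    (ha1cont : ContinuousOn (a 1) (Set.Icc (0:ℝ) π)) :
    Nφ0 ^ 2 ≤ (π / 2) * Real.exp (4 * π) * a 1 π ^ 2 + Real.exp (-2 * π) * Nψ ^ 2 ∧
    (π / 8) * a 1 π ^ 2 ≤ (∫ t in Set.Ioc (0:ℝ) π, ((π / 2) * a 1 t) ^ 2) ∧
    Nφ0 ≤ Real.exp (-π) * Nψ +
      2 * Real.exp (2 * π) *
        Real.sqrt (∫ t in Set.Ioc (0:ℝ) π, ((π / 2) * a 1 t) ^ 2) := by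
  have hπ := Real.pi_pos
  have hπ3 := Real.pi_gt_three
  -- squared coefficient bound
  have hsq : ∀ k : ℕ, 1 ≤ k →
      a k 0 ^ 2 ≤ Real.exp (-((k:ℝ)^2 - 3) * π) ^ 2 * a k π ^ 2 := by
    intro k hk
    have h := hbd k hk
    have h0 := abs_nonneg (a k 0)
    have h2 : |a k 0| ^ 2 ≤ (Real.exp (-((k:ℝ)^2 - 3) * π) * |a k π|) ^ 2 :=
      pow_le_pow_left₀ h0 h 2
    calc a k 0 ^ 2 = |a k 0| ^ 2 := (sq_abs _).symm
      _ ≤ _ := h2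
      _ = Real.exp (-((k:ℝ)^2 - 3) * π) ^ 2 * a k π ^ 2 := by rw [mul_pow, sq_abs]
  -- Part 1
  have part1 : Nφ0 ^ 2 ≤ (π / 2) * Real.exp (4 * π) * a 1 π ^ 2
      + Real.exp (-2 * π) * Nψ ^ 2 := by
    have hsplit : (∑' k : ℕ, a (k + 1) 0 ^ 2)
        = a 1 0 ^ 2 + ∑' k : ℕ, a (k + 2) 0 ^ 2 := by
      rw [Summable.tsum_eq_zero_add hsum0]
    have hsum0' : Summable fun k : ℕ => a (k + 2) 0 ^ 2 := by
      have := (summable_nat_add_iff 1).2 hsum0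
      convert this using 2 with k
    have hsumπ' : Summable fun k : ℕ => a (k + 2) π ^ 2 := by
      have := (summable_nat_add_iff 1).2 hsumπ
      convert this using 2 with k
    have htail : (∑' k : ℕ, a (k + 2) 0 ^ 2)
        ≤ Real.exp (-2 * π) * ∑' k : ℕ, a (k + 2) π ^ 2 := by
      rw [← tsum_mul_left]
      apply Summable.tsum_le_tsum _ hsum0' (hsumπ'.mul_left _)
      intro k
      have h := hsq (k + 2) (by omega)
      refine h.trans ?_
      have hc : ((k + 2 : ℕ) : ℝ) ^ 2 - 3 ≥ 1 := by
        push_cast; nlinarith [Nat.cast_nonneg (α := ℝ) k]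
      have hee : Real.exp (-(((k + 2 : ℕ):ℝ)^2 - 3) * π) ^ 2 ≤ Real.exp (-2 * π) := by
        rw [sq, ← Real.exp_add]
        apply Real.exp_le_exp.2
        nlinarith
      nlinarith [sq_nonneg (a (k + 2) π),
        sq_nonneg (Real.exp (-(((k + 2 : ℕ):ℝ)^2 - 3) * π))]
    have htail2 : (∑' k : ℕ, a (k + 2) π ^ 2) ≤ ∑' k : ℕ, a (k + 1) π ^ 2 := by
      apply Summable.tsum_le_tsum_of_inj (fun k => k + 1)
        (fun x y h => by simpa using h)
        (fun c _ => by positivity)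
        (fun k => le_of_eq (by norm_num)) hsumπ' hsumπ
    have h10 : a 1 0 ^ 2 ≤ Real.exp (4 * π) * a 1 π ^ 2 := by
      have h := hsq 1 le_rfl
      have he : Real.exp (-(((1:ℕ):ℝ)^2 - 3) * π) ^ 2 = Real.exp (4 * π) := by
        rw [sq, ← Real.exp_add]
        norm_num
        ring_nf
      rwa [he] at h
    rw [hφ0, hψ, hsplit]
    have hE := Real.exp_pos (-2*π)
    have hmul : Real.exp (-2 * π) * (∑' k : ℕ, a (k + 2) π ^ 2)
        ≤ Real.exp (-2 * π) * ∑' k : ℕ, a (k + 1) π ^ 2 := by nlinarith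
    nlinarith
  -- Part 2
  have hIoc : Set.Ioc (0:ℝ) π ⊆ Set.Icc 0 π := Set.Ioc_subset_Icc_self
  have hint1 : IntegrableOn (fun t => ((π / 2) * a 1 t) ^ 2) (Set.Ioc 0 π) := by
    apply ContinuousOn.integrableOn_Icc (by fun_prop) |>.mono_set hIoc
  have hint2 : IntegrableOn (fun t => (π/2)^2 * (Real.exp (2*(t - π)) * a 1 π ^ 2))
      (Set.Ioc 0 π) := by
    apply ContinuousOn.integrableOn_Icc (by fun_prop) |>.mono_set hIoc
  have hmono : (∫ t in Set.Ioc (0:ℝ) π, (π/2)^2 * (Real.exp (2*(t - π)) * a 1 π ^ 2))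
      ≤ ∫ t in Set.Ioc (0:ℝ) π, ((π / 2) * a 1 t) ^ 2 := by
    apply setIntegral_mono_on hint2 hint1 measurableSet_Ioc
    intro t ht
    have h := h1 t (hIoc ht)
    have hnn : 0 ≤ Real.exp (t - π) * |a 1 π| := by positivity
    have h2 : (Real.exp (t - π) * |a 1 π|) ^ 2 ≤ |a 1 t| ^ 2 :=
      pow_le_pow_left₀ hnn h 2
    have he : Real.exp (t - π) ^ 2 = Real.exp (2*(t - π)) := by
      rw [sq, ← Real.exp_add]; ring_nf
    rw [mul_pow, he, sq_abs, sq_abs] at h2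
    rw [mul_pow]
    nlinarith [sq_nonneg (π/2)]
  have hexpint : (∫ t in Set.Ioc (0:ℝ) π, Real.exp (2*(t - π)))
      = (1 - Real.exp (-2*π)) / 2 := by
    rw [← intervalIntegral.integral_of_le (le_of_lt hπ)]
    have hd : ∀ t ∈ Set.uIcc (0:ℝ) π, HasDerivAt (fun s => Real.exp (2*(s - π)) / 2)
        (Real.exp (2*(t - π))) t := by
      intro t _
      have h : HasDerivAt (fun s : ℝ => 2*(s - π)) 2 t := by
        simpa using ((hasDerivAt_id t).sub_const π).const_mul 2
      have := (h.exp).div_const 2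
      simpa [mul_comm] using this
    rw [intervalIntegral.integral_eq_sub_of_hasDerivAt hd
      ((Continuous.intervalIntegrable (by fun_prop) 0 π))]
    rw [show (2:ℝ)*(π - π) = 0 by ring, show (2:ℝ)*(0 - π) = -2*π by ring]
    simp [Real.exp_zero]
    ring
  have hexp_small : Real.exp (-2*π) ≤ Real.exp (-2) := by
    apply Real.exp_le_exp.2; nlinarith
  have he2 : Real.exp (-2:ℝ) ≤ 1/2 := by
    have hp := Real.exp_pos (2:ℝ)
    have hm : Real.exp (-2:ℝ) * Real.exp 2 = 1 := by
      rw [← Real.exp_add]; norm_num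
    have h3 : (3:ℝ) ≤ Real.exp 2 := by nlinarith [Real.add_one_le_exp (2:ℝ)]
    nlinarith [Real.exp_pos (-2:ℝ)]
  have part2 : (π / 8) * a 1 π ^ 2 ≤ ∫ t in Set.Ioc (0:ℝ) π, ((π / 2) * a 1 t) ^ 2 := by
    have hc : (∫ t in Set.Ioc (0:ℝ) π, (π/2)^2 * (Real.exp (2*(t - π)) * a 1 π ^ 2))
        = (π/2)^2 * a 1 π ^ 2 * ((1 - Real.exp (-2*π)) / 2) := by
      rw [integral_const_mul]
      have : (∫ t in Set.Ioc (0:ℝ) π, Real.exp (2*(t - π)) * a 1 π ^ 2)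
          = (∫ t in Set.Ioc (0:ℝ) π, Real.exp (2*(t - π))) * a 1 π ^ 2 := by
        rw [integral_mul_const]
      rw [this, hexpint]; ring
    have key : π/8 ≤ (π/2)^2 * ((1 - Real.exp (-2*π)) / 2) := by
      nlinarith [Real.exp_pos (-2*π)]
    calc (π / 8) * a 1 π ^ 2
        ≤ (π/2)^2 * ((1 - Real.exp (-2*π)) / 2) * a 1 π ^ 2 :=
          mul_le_mul_of_nonneg_right key (sq_nonneg _)
      _ = (π/2)^2 * a 1 π ^ 2 * ((1 - Real.exp (-2*π)) / 2) := by ring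
      _ = _ := hc.symm
      _ ≤ _ := hmono
  refine ⟨part1, part2, ?_⟩
  -- Part 3
  set I := ∫ t in Set.Ioc (0:ℝ) π, ((π / 2) * a 1 t) ^ 2 with hI
  clear_value I
  have hInn : 0 ≤ I := le_trans (by positivity) part2
  have hA : (0:ℝ) ≤ (π / 2) * Real.exp (4 * π) * a 1 π ^ 2 := by positivity
  have hB : (0:ℝ) ≤ Real.exp (-2 * π) * Nψ ^ 2 := by positivity
  have step1 : Nφ0 ≤ Real.sqrt ((π / 2) * Real.exp (4 * π) * a 1 π ^ 2)
      + Real.sqrt (Real.exp (-2 * π) * Nψ ^ 2) := by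
    have := Real.sqrt_le_sqrt part1
    rw [Real.sqrt_sq hNφ0] at this
    exact this.trans (sqrt_add_le' hA hB)
  have hsB : Real.sqrt (Real.exp (-2 * π) * Nψ ^ 2) = Real.exp (-π) * Nψ := by
    rw [Real.sqrt_mul (Real.exp_pos _).le, Real.sqrt_sq hNψ]
    congr 1
    rw [show (-2:ℝ)*π = (-π) + (-π) by ring, Real.exp_add]
    exact Real.sqrt_mul_self (Real.exp_pos _).le
  have hsA : Real.sqrt ((π / 2) * Real.exp (4 * π) * a 1 π ^ 2)
      ≤ 2 * Real.exp (2 * π) * Real.sqrt I := by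
    have h1' : Real.sqrt ((π / 2) * Real.exp (4 * π) * a 1 π ^ 2)
        = Real.exp (2*π) * Real.sqrt ((π / 2) * a 1 π ^ 2) := by
      have hE : Real.exp (2*π)^2 = Real.exp (4*π) := by
        rw [sq, ← Real.exp_add]; ring_nf
      rw [show (π / 2) * Real.exp (4 * π) * a 1 π ^ 2
        = Real.exp (2*π)^2 * ((π/2) * a 1 π ^ 2) by rw [hE]; ring]
      rw [Real.sqrt_mul (by positivity), Real.sqrt_sq (Real.exp_pos _).le]
    have h2' : Real.sqrt ((π / 2) * a 1 π ^ 2) ≤ 2 * Real.sqrt I := by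
      have heq : (π / 2) * a 1 π ^ 2 = 2^2 * ((π/8) * a 1 π ^ 2) := by ring
      rw [heq, Real.sqrt_mul (by norm_num : (0:ℝ) ≤ 2^2),
        Real.sqrt_sq (by norm_num : (0:ℝ) ≤ 2)]
      exact mul_le_mul_of_nonneg_left (Real.sqrt_le_sqrt part2) (by norm_num)
    rw [h1']
    calc Real.exp (2*π) * Real.sqrt ((π / 2) * a 1 π ^ 2)
        ≤ Real.exp (2*π) * (2 * Real.sqrt I) :=
          mul_le_mul_of_nonneg_left h2' (Real.exp_pos _).le
      _ = 2 * Real.exp (2 * π) * Real.sqrt I := by ring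
  calc Nφ0 ≤ _ := step1
    _ ≤ Real.exp (-π) * Nψ + 2 * Real.exp (2 * π) * Real.sqrt I := by
        rw [hsB]; linarith
end
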